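/- arXiv:2205.15642 — 2 statements merged into one kernel-verified Lean document; each statement's English description precedes it below -/
import Mathlib

section
/- Suppose 0 ≤ q ≤ 1 and q < u < 1, and suppose there exists a > 0 such that 0 ≤ Q(N) ≤ a N^{1+u} for all N ≥ 1. Then there exists a real constant c such that for all integers N ≥ 1, σ_C(N)² ≤ c · N^{u−1}. (The upper bound on the capacity variance used in the proof of Corollary 1.) -/
open Filter Real

/-- Area of a single IRS reflecting element: `A_N = A₀ N^{-q}`. -/
noncomputable def irsElemArea (A₀ q : ℝ) (N : ℕ) : ℝ := A₀ * (N : ℝ) ^ (-q)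

/-- `ᾱ_N = α_r α_s A_N² / (1 + κ_r)`. -/
noncomputable def alphaBarN (A₀ αr αs κr q : ℝ) (N : ℕ) : ℝ :=
  αr * αs * (irsElemArea A₀ q N) ^ 2 / (1 + κr)

/-- `μ(N) = α_d A_M + κ_r ᾱ_N N² + ᾱ_N Q(N)`. -/
noncomputable def muN (A₀ αd αr αs AM κr q : ℝ) (Q : ℕ → ℝ) (N : ℕ) : ℝ :=
  αd * AM + κr * alphaBarN A₀ αr αs κr q N * (N : ℝ) ^ 2
    + alphaBarN A₀ αr αs κr q N * Q N

/-- `η(N) = α_d A_M / M + ᾱ_N Q(N)`. -/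
noncomputable def etaN (A₀ αd αr αs AM κr q : ℝ) (M : ℕ) (Q : ℕ → ℝ) (N : ℕ) : ℝ :=
  αd * AM / M + alphaBarN A₀ αr αs κr q N * Q N

/-- `ω(N) = 2 κ_r ᾱ_N N² + ᾱ_N Q(N)`. -/
noncomputable def omegaN (A₀ αr αs κr q : ℝ) (Q : ℕ → ℝ) (N : ℕ) : ℝ :=
  2 * κr * alphaBarN A₀ αr αs κr q N * (N : ℝ) ^ 2
    + alphaBarN A₀ αr αs κr q N * Q N

/-- Asymptotic standard deviation of the capacity:
`σ_C(N) = (ρ M log₂ e / (1 + ρ M μ(N))) √(ω(N) η(N) + η(N) + ((M-1)/M) α_d A_M)`. -/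
noncomputable def sigmaCap (A₀ αd αr αs AM ρ κr q : ℝ) (M : ℕ) (Q : ℕ → ℝ) (N : ℕ) : ℝ :=
  ρ * M * Real.logb 2 (Real.exp 1) / (1 + ρ * M * muN A₀ αd αr αs AM κr q Q N) *
    Real.sqrt (omegaN A₀ αr αs κr q Q N * etaN A₀ αd αr αs AM κr q M Q N
      + etaN A₀ αd αr αs AM κr q M Q N + ((M : ℝ) - 1) / M * (αd * AM))

set_option maxHeartbeats 1000000 in
/-- The upper bound on the capacity variance used in the proof of Corollary 1:
if `0 ≤ q ≤ 1`, `q < u < 1` and `0 ≤ Q(N) ≤ a N^{1+u}`, then `σ_C(N)² ≤ c N^{u-1}`. -/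
theorem capacity_variance_upper_bound
    (A₀ αd αr αs AM ρ κr : ℝ) (hA₀ : 0 < A₀) (hαd : 0 < αd) (hαr : 0 < αr)
    (hαs : 0 < αs) (hAM : 0 < AM) (hρ : 0 < ρ) (hκr : 0 < κr)
    (M : ℕ) (hM : 1 ≤ M) (q u : ℝ) (hq0 : 0 ≤ q) (hq1 : q ≤ 1)
    (hqu : q < u) (hu1 : u < 1) (Q : ℕ → ℝ)
    (hQ : ∃ a : ℝ, 0 < a ∧ ∀ N : ℕ, 1 ≤ N → 0 ≤ Q N ∧ Q N ≤ a * (N : ℝ) ^ (1 + u)) :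
    ∃ c : ℝ, ∀ N : ℕ, 1 ≤ N →
      (sigmaCap A₀ αd αr αs AM ρ κr q M Q N) ^ 2 ≤ c * (N : ℝ) ^ (u - 1) := by

  obtain ⟨a, ha, hQb⟩ := hQ
  have hKpos : 0 < Real.logb 2 (Real.exp 1) := by
    apply Real.logb_pos one_lt_two
    have := Real.exp_one_gt_d9; linarith
  set K := Real.logb 2 (Real.exp 1) with hKdef
  have hκ1 : (0:ℝ) < 1 + κr := by linarith
  set c₂ := αr * αs * A₀ ^ 2 / (1 + κr) with hc₂def
  have hc₂ : 0 < c₂ := by positivity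
  have hMpos : (0:ℝ) < M := by exact_mod_cast Nat.lt_of_lt_of_le Nat.zero_lt_one hM
  have hM1 : (1:ℝ) ≤ M := by exact_mod_cast hM
  set Cω := 2 * κr * c₂ + c₂ * a with hCωdef
  set Cη := αd * AM / M + c₂ * a with hCηdef
  set T := ((M:ℝ) - 1) / M * (αd * AM) with hTdef
  set CS := Cω * Cη + Cη + T with hCSdef
  have hCω : 0 < Cω := by positivity
  have hCη : 0 < Cη := by positivity
  have hT : 0 ≤ T := by
    apply mul_nonneg _ (by positivity)
    apply div_nonneg (by linarith) hMpos.le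
  have hCS : 0 ≤ CS := by positivity
  refine ⟨(K / (κr * c₂)) ^ 2 * CS, ?_⟩
  intro N hN
  have hn : (1:ℝ) ≤ (N:ℝ) := by exact_mod_cast hN
  have hn0 : (0:ℝ) < (N:ℝ) := by linarith
  have hpow : ∀ r s : ℝ, (N:ℝ) ^ r * (N:ℝ) ^ s = (N:ℝ) ^ (r + s) :=
    fun r s => (Real.rpow_add hn0 r s).symm
  have hmono : ∀ r s : ℝ, r ≤ s → (N:ℝ) ^ r ≤ (N:ℝ) ^ s :=
    fun r s h => Real.rpow_le_rpow_of_exponent_le hn h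
  have hone : ∀ r : ℝ, 0 ≤ r → (1:ℝ) ≤ (N:ℝ) ^ r := by
    intro r hr
    have := hmono 0 r hr
    simpa using this
  have hrnn : ∀ r : ℝ, 0 ≤ (N:ℝ) ^ r := fun r => Real.rpow_nonneg hn0.le r
  -- rewrite alphaBar
  have hαbar : alphaBarN A₀ αr αs κr q N = c₂ * (N:ℝ) ^ (-(2*q)) := by
    simp only [alphaBarN, irsElemArea, hc₂def]
    rw [mul_pow, ← Real.rpow_natCast ((N:ℝ) ^ (-q)) 2, ← Real.rpow_mul hn0.le]
    rw [show (-q) * ((2:ℕ):ℝ) = -(2*q) by push_cast; ring]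
    ring
  have hNsq : ((N:ℝ)) ^ (2:ℕ) = (N:ℝ) ^ ((2:ℝ)) := by
    rw [← Real.rpow_natCast (N:ℝ) 2]; norm_num
  have hαN2 : alphaBarN A₀ αr αs κr q N * (N:ℝ) ^ (2:ℕ) = c₂ * (N:ℝ) ^ (2 - 2*q) := by
    rw [hαbar, hNsq, mul_assoc, hpow]
    ring_nf
  obtain ⟨hQ0, hQa⟩ := hQb N hN
  have hαQ0 : 0 ≤ alphaBarN A₀ αr αs κr q N * Q N := by
    rw [hαbar]; exact mul_nonneg (by positivity) hQ0
  have hαQ : alphaBarN A₀ αr αs κr q N * Q N ≤ c₂ * a * (N:ℝ) ^ (1 + u - 2*q) := by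
    rw [hαbar]
    calc c₂ * (N:ℝ) ^ (-(2*q)) * Q N ≤ c₂ * (N:ℝ) ^ (-(2*q)) * (a * (N:ℝ) ^ (1+u)) := by
          apply mul_le_mul_of_nonneg_left hQa (by positivity)
      _ = c₂ * a * ((N:ℝ) ^ (-(2*q)) * (N:ℝ) ^ (1+u)) := by ring
      _ = c₂ * a * (N:ℝ) ^ (1 + u - 2*q) := by rw [hpow]; ring_nf
  -- exponent facts
  have he2 : (0:ℝ) ≤ 1 + u - 2*q := by linarith
  have he1 : (0:ℝ) ≤ 2 - 2*q := by linarith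
  have he21 : 1 + u - 2*q ≤ 2 - 2*q := by linarith
  -- mu lower bound and denominator
  have hμlow : κr * c₂ * (N:ℝ) ^ (2 - 2*q) ≤ muN A₀ αd αr αs AM κr q Q N := by
    simp only [muN]
    have h1 : κr * alphaBarN A₀ αr αs κr q N * (N:ℝ) ^ (2:ℕ)
        = κr * (c₂ * (N:ℝ) ^ (2 - 2*q)) := by rw [mul_assoc, hαN2]
    rw [h1]
    have := mul_pos hαd hAM
    linarith
  have hμ0 : 0 ≤ muN A₀ αd αr αs AM κr q Q N :=
    le_trans (by positivity) hμlow
  have hden : 0 < 1 + ρ * M * muN A₀ αd αr αs AM κr q Q N := by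
    have := mul_nonneg (mul_nonneg hρ.le hMpos.le) hμ0
    linarith
  have hμlb : ρ * M * (κr * c₂) * (N:ℝ) ^ (2 - 2*q)
      ≤ 1 + ρ * M * muN A₀ αd αr αs AM κr q Q N := by
    have h2 := mul_le_mul_of_nonneg_left hμlow (mul_nonneg hρ.le hMpos.le)
    calc ρ * M * (κr * c₂) * (N:ℝ) ^ (2 - 2*q)
        = ρ * (M:ℝ) * (κr * c₂ * (N:ℝ) ^ (2 - 2*q)) := by ring
      _ ≤ ρ * (M:ℝ) * muN A₀ αd αr αs AM κr q Q N := h2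
      _ ≤ 1 + ρ * M * muN A₀ αd αr αs AM κr q Q N := by linarith
  -- fraction bound
  set F := ρ * M * K / (1 + ρ * M * muN A₀ αd αr αs AM κr q Q N) with hFdef
  have hF0 : 0 ≤ F := by
    apply div_nonneg (by positivity) hden.le
  have hD0 : 0 < ρ * M * (κr * c₂) * (N:ℝ) ^ (2 - 2*q) := by positivity
  have hFle : F ≤ K / (κr * c₂) * (N:ℝ) ^ (-(2 - 2*q)) := by
    have h1 : F ≤ ρ * M * K / (ρ * M * (κr * c₂) * (N:ℝ) ^ (2 - 2*q)) :=
      div_le_div_of_nonneg_left (by positivity) hD0 hμlb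
    refine h1.trans_eq ?_
    rw [Real.rpow_neg hn0.le]
    have hNe : ((N:ℝ) ^ (2 - 2*q)) ≠ 0 := by positivity
    field_simp
  have hF2 : F ^ 2 ≤ (K / (κr * c₂)) ^ 2 * (N:ℝ) ^ (-(2*(2 - 2*q))) := by
    have h := pow_le_pow_left₀ hF0 hFle 2
    refine h.trans_eq ?_
    rw [mul_pow, ← Real.rpow_natCast ((N:ℝ) ^ (-(2 - 2*q))) 2, ← Real.rpow_mul hn0.le,
      show (-(2 - 2*q)) * ((2:ℕ):ℝ) = -(2*(2 - 2*q)) by push_cast; ring]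
  -- eta and omega bounds
  have hη0 : 0 ≤ etaN A₀ αd αr αs AM κr q M Q N := by
    simp only [etaN]
    have : (0:ℝ) ≤ αd * AM / M := by positivity
    linarith
  have hηle : etaN A₀ αd αr αs AM κr q M Q N ≤ Cη * (N:ℝ) ^ (1 + u - 2*q) := by
    simp only [etaN, hCηdef]
    have h1 : αd * AM / M ≤ αd * AM / M * (N:ℝ) ^ (1 + u - 2*q) :=
      le_mul_of_one_le_right (by positivity) (hone _ he2)
    have h2 := hαQ
    have : (αd * AM / M + c₂ * a) * (N:ℝ) ^ (1 + u - 2*q)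
        = αd * AM / M * (N:ℝ) ^ (1 + u - 2*q) + c₂ * a * (N:ℝ) ^ (1 + u - 2*q) := by ring
    linarith
  have hω0 : 0 ≤ omegaN A₀ αr αs κr q Q N := by
    simp only [omegaN]
    have h1 : 2 * κr * alphaBarN A₀ αr αs κr q N * (N:ℝ) ^ (2:ℕ)
        = 2 * κr * (c₂ * (N:ℝ) ^ (2 - 2*q)) := by
      rw [mul_assoc, hαN2]
    rw [h1]
    have : (0:ℝ) ≤ 2 * κr * (c₂ * (N:ℝ) ^ (2 - 2*q)) := by positivity
    linarith
  have hωle : omegaN A₀ αr αs κr q Q N ≤ Cω * (N:ℝ) ^ (2 - 2*q) := by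
    simp only [omegaN, hCωdef]
    have h1 : 2 * κr * alphaBarN A₀ αr αs κr q N * (N:ℝ) ^ (2:ℕ)
        = 2 * κr * (c₂ * (N:ℝ) ^ (2 - 2*q)) := by
      rw [mul_assoc, hαN2]
    rw [h1]
    have h2 : c₂ * a * (N:ℝ) ^ (1 + u - 2*q) ≤ c₂ * a * (N:ℝ) ^ (2 - 2*q) :=
      mul_le_mul_of_nonneg_left (hmono _ _ he21) (by positivity)
    have h3 : (2 * κr * c₂ + c₂ * a) * (N:ℝ) ^ (2 - 2*q)
        = 2 * κr * (c₂ * (N:ℝ) ^ (2 - 2*q)) + c₂ * a * (N:ℝ) ^ (2 - 2*q) := by ring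
    linarith [hαQ]
  -- total S bound
  set S := omegaN A₀ αr αs κr q Q N * etaN A₀ αd αr αs AM κr q M Q N
      + etaN A₀ αd αr αs AM κr q M Q N + ((M:ℝ) - 1) / M * (αd * AM) with hSdef
  have hS0 : 0 ≤ S := by
    have := mul_nonneg hω0 hη0
    simp only [hSdef, ← hTdef]; linarith
  have hSle : S ≤ CS * (N:ℝ) ^ (3 + u - 4*q) := by
    have hωη : omegaN A₀ αr αs κr q Q N * etaN A₀ αd αr αs AM κr q M Q N
        ≤ Cω * Cη * (N:ℝ) ^ (3 + u - 4*q) := by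
      calc omegaN A₀ αr αs κr q Q N * etaN A₀ αd αr αs AM κr q M Q N
          ≤ (Cω * (N:ℝ) ^ (2 - 2*q)) * (Cη * (N:ℝ) ^ (1 + u - 2*q)) :=
            mul_le_mul hωle hηle hη0 (by positivity)
        _ = Cω * Cη * ((N:ℝ) ^ (2 - 2*q) * (N:ℝ) ^ (1 + u - 2*q)) := by ring
        _ = Cω * Cη * (N:ℝ) ^ (3 + u - 4*q) := by rw [hpow]; ring_nf
    have hη2 : etaN A₀ αd αr αs AM κr q M Q N ≤ Cη * (N:ℝ) ^ (3 + u - 4*q) := by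
      refine hηle.trans ?_
      exact mul_le_mul_of_nonneg_left (hmono _ _ (by linarith)) hCη.le
    have hT2 : T ≤ T * (N:ℝ) ^ (3 + u - 4*q) :=
      le_mul_of_one_le_right hT (hone _ (by linarith))
    have hexp : (Cω * Cη + Cη + T) * (N:ℝ) ^ (3 + u - 4*q)
        = Cω * Cη * (N:ℝ) ^ (3 + u - 4*q) + Cη * (N:ℝ) ^ (3 + u - 4*q)
          + T * (N:ℝ) ^ (3 + u - 4*q) := by ring
    simp only [hSdef, ← hTdef, hCSdef]
    linarith
  -- put it together
  have hσ : (sigmaCap A₀ αd αr αs AM ρ κr q M Q N) ^ 2 = F ^ 2 * S := by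
    simp only [sigmaCap, ← hKdef, ← hFdef, ← hSdef, mul_pow, Real.sq_sqrt hS0]
  rw [hσ]
  calc F ^ 2 * S
      ≤ ((K / (κr * c₂)) ^ 2 * (N:ℝ) ^ (-(2*(2 - 2*q)))) * (CS * (N:ℝ) ^ (3 + u - 4*q)) :=
        mul_le_mul hF2 hSle hS0 (by positivity)
    _ = (K / (κr * c₂)) ^ 2 * CS * ((N:ℝ) ^ (-(2*(2 - 2*q))) * (N:ℝ) ^ (3 + u - 4*q)) := by
        ring
    _ = (K / (κr * c₂)) ^ 2 * CS * (N:ℝ) ^ (u - 1) := by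
        rw [hpow]; ring_nf
end

section
/- Suppose 0 ≤ q ≤ 1 and q < u < 1, and suppose there exists a > 0 such that 0 ≤ Q(N) ≤ a N^{1+u} for all N ≥ 1. Then σ_C(N)² tends to 0 as N → ∞. (Second half of Corollary 1: the variance of the capacity of an IRS-aided MISO channel with sub-linearly growing IRS area and sub-linearly growing maximum spatial-correlation eigenvalue converges to zero, i.e., the end-to-end channel hardens.) -/
open Filter Real

/-!
Write `β_N = ᾱ_N N²` and `t_N = Q(N) / N²`, so that `ᾱ_N Q(N) = β_N t_N`. Since `q < u < 1`,
`β_N ≍ N^{2-2q} → ∞`, while `0 ≤ t_N ≤ a N^{u-1} → 0`. Dividing numerator and denominator of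
`σ_C²` by `β_N²` turns it into a rational function of `(β_N⁻¹, t_N)` that is continuous at
`(0, 0)`, where its denominator is `(ρ M κ_r)² ≠ 0` and its numerator vanishes.
-/
noncomputable def capacityVarianceModel (P κ m d e c β t : ℝ) : ℝ :=
  P ^ 2 * ((2 * κ * β + β * t) * (e + β * t) + (e + β * t) + c) / (1 + m * (d + κ * β + β * t)) ^ 2

theorem tendsto_capacityVarianceModel {ι : Type*} {l : Filter ι} {β t : ι → ℝ}
    (hβ : Tendsto β l atTop) (ht : Tendsto t l (nhds 0)) (P κ m d e c : ℝ) (hm : m ≠ 0)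
    (hκ : κ ≠ 0) :
    Tendsto (fun i => capacityVarianceModel P κ m d e c (β i) (t i)) l (nhds 0) := by
  have hcont : ContinuousAt (fun p : ℝ × ℝ => P ^ 2 * ((2 * κ + p.2) * (e * p.1 + p.2)
      + e * p.1 ^ 2 + p.2 * p.1 + c * p.1 ^ 2) / (p.1 + m * (d * p.1 + κ + p.2)) ^ 2) (0, 0) := by
    fun_prop (disch := simp [hm, hκ])
  refine Tendsto.congr' ?_ <| (hcont.tendsto.comp <|
    (tendsto_inv_atTop_zero.comp hβ).prodMk_nhds ht).mono_right (le_of_eq (by simp))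
  filter_upwards [hβ.eventually_gt_atTop 0] with i hi
  simp only [Function.comp_apply, capacityVarianceModel]
  field_simp
  ring

lemma alphaBarN_mul_sq (A₀ αr αs κr q : ℝ) {N : ℕ} (hN : N ≠ 0) :
    alphaBarN A₀ αr αs κr q N * (N : ℝ) ^ 2 =
      αr * αs * A₀ ^ 2 / (1 + κr) * (N : ℝ) ^ (2 - 2 * q) := by
  have hN' : (0 : ℝ) < N := by positivity
  have hpow : ((N : ℝ) ^ (-q)) ^ 2 * (N : ℝ) ^ 2 = (N : ℝ) ^ (2 - 2 * q) := by
    rw [← Real.rpow_mul_natCast hN'.le, ← Real.rpow_natCast (N : ℝ) 2, ← Real.rpow_add hN']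
    ring_nf
  rw [alphaBarN, irsElemArea, mul_pow]
  linear_combination αr * αs * A₀ ^ 2 / (1 + κr) * hpow

lemma tendsto_alphaBarN_mul_sq_atTop {A₀ αr αs κr q : ℝ} (hA₀ : A₀ ≠ 0) (hαr : 0 < αr)
    (hαs : 0 < αs) (hκr : 0 < κr) (hq : q < 1) :
    Tendsto (fun N : ℕ => alphaBarN A₀ αr αs κr q N * (N : ℝ) ^ 2) atTop atTop := by
  have hpow := (tendsto_rpow_atTop (by linarith : 0 < 2 - 2 * q)).comp
    (tendsto_natCast_atTop_atTop (R := ℝ))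
  refine Tendsto.congr' ?_ (hpow.const_mul_atTop (by positivity : 0 < αr * αs * A₀ ^ 2 / (1 + κr)))
  filter_upwards [eventually_ne_atTop 0] with N hN
  rw [alphaBarN_mul_sq A₀ αr αs κr q hN, Function.comp_apply]

lemma tendsto_div_sq_of_le_rpow {f : ℕ → ℝ} {a u : ℝ} (hu : u < 1)
    (hf : ∀ N : ℕ, 1 ≤ N → 0 ≤ f N ∧ f N ≤ a * (N : ℝ) ^ (1 + u)) :
    Tendsto (fun N : ℕ => f N / (N : ℝ) ^ 2) atTop (nhds 0) := by
  have hbound : Tendsto (fun N : ℕ => a * (N : ℝ) ^ (u - 1)) atTop (nhds 0) := by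
    simpa using ((tendsto_rpow_neg_atTop (by linarith : 0 < 1 - u)).comp
      (tendsto_natCast_atTop_atTop (R := ℝ))).const_mul a
  refine squeeze_zero' ?_ ?_ hbound
  · filter_upwards [eventually_ge_atTop 1] with N hN
    have := (hf N hN).1
    positivity
  · filter_upwards [eventually_ge_atTop 1] with N hN
    have hN' : (0 : ℝ) < N := by positivity
    rw [div_le_iff₀ (by positivity), mul_assoc, ← Real.rpow_natCast, ← Real.rpow_add hN',
      show u - 1 + ((2 : ℕ) : ℝ) = 1 + u by push_cast; ring]
    exact (hf N hN).2

lemma sq_sigmaCap_eq {A₀ αd αr αs AM ρ κr q : ℝ} (hd : 0 ≤ αd * AM) (hαr : 0 ≤ αr)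
    (hαs : 0 ≤ αs) (hκr : 0 ≤ κr)
    {M : ℕ} (hM : 1 ≤ M) {Q : ℕ → ℝ} {N : ℕ} (hN : N ≠ 0) (hQ : 0 ≤ Q N) :
    sigmaCap A₀ αd αr αs AM ρ κr q M Q N ^ 2 =
      capacityVarianceModel (ρ * M * Real.logb 2 (Real.exp 1)) κr (ρ * M) (αd * AM)
        (αd * AM / M) ((M - 1) / M * (αd * AM))
        (alphaBarN A₀ αr αs κr q N * (N : ℝ) ^ 2) (Q N / (N : ℝ) ^ 2) := by
  have hM' : (0 : ℝ) ≤ M - 1 := sub_nonneg.mpr (by exact_mod_cast hM)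
  have hᾱ : 0 ≤ alphaBarN A₀ αr αs κr q N := by
    unfold alphaBarN
    positivity
  have hradicand : 0 ≤ omegaN A₀ αr αs κr q Q N * etaN A₀ αd αr αs AM κr q M Q N
      + etaN A₀ αd αr αs AM κr q M Q N + ((M : ℝ) - 1) / M * (αd * AM) := by
    unfold omegaN etaN
    positivity
  have hsplit : alphaBarN A₀ αr αs κr q N * Q N
      = alphaBarN A₀ αr αs κr q N * (N : ℝ) ^ 2 * (Q N / (N : ℝ) ^ 2) := by
    field_simp
  rw [sigmaCap, mul_pow, div_pow, Real.sq_sqrt hradicand, capacityVarianceModel]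
  simp only [omegaN, etaN, muN, hsplit]
  ring

theorem capacity_variance_tendsto_zero_general
    (A₀ αd αr αs AM ρ κr : ℝ) (hA₀ : 0 < A₀) (hαd : 0 < αd) (hαr : 0 < αr)
    (hαs : 0 < αs) (hAM : 0 < AM) (hρ : 0 < ρ) (hκr : 0 < κr)
    (M : ℕ) (hM : 1 ≤ M) (q u : ℝ)
    (hqu : q < u) (hu1 : u < 1) (Q : ℕ → ℝ)
    (hQ : ∃ a : ℝ, 0 < a ∧ ∀ N : ℕ, 1 ≤ N → 0 ≤ Q N ∧ Q N ≤ a * (N : ℝ) ^ (1 + u)) :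
    Tendsto (fun N : ℕ => (sigmaCap A₀ αd αr αs AM ρ κr q M Q N) ^ 2)
      atTop (nhds 0) := by
  obtain ⟨a, -, hQa⟩ := hQ
  have hβ := tendsto_alphaBarN_mul_sq_atTop hA₀.ne' hαr hαs hκr (hqu.trans hu1)
  have ht := tendsto_div_sq_of_le_rpow hu1 hQa
  have hm : ρ * M ≠ 0 := mul_ne_zero hρ.ne' (Nat.cast_ne_zero.mpr (by omega))
  refine (tendsto_capacityVarianceModel hβ ht (ρ * M * Real.logb 2 (Real.exp 1)) κr (ρ * M)
    (αd * AM) (αd * AM / M) ((M - 1) / M * (αd * AM)) hm hκr.ne').congr' ?_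
  filter_upwards [eventually_ge_atTop 1] with N hN
  exact (sq_sigmaCap_eq (by positivity) hαr.le hαs.le hκr.le hM (by omega) (hQa N hN).1).symm

/-- Second half of Corollary 1: under sub-linear IRS area scaling (`0 ≤ q ≤ 1`) and a
sub-linearly growing maximum correlation eigenvalue (`0 ≤ Q(N) ≤ a N^{1+u}`, `q < u < 1`),
the asymptotic capacity variance `σ_C(N)²` converges to zero, i.e. the channel hardens. -/
theorem capacity_variance_tendsto_zero
    (A₀ αd αr αs AM ρ κr : ℝ) (hA₀ : 0 < A₀) (hαd : 0 < αd) (hαr : 0 < αr)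
    (hαs : 0 < αs) (hAM : 0 < AM) (hρ : 0 < ρ) (hκr : 0 < κr)
    (M : ℕ) (hM : 1 ≤ M) (q u : ℝ) (hq0 : 0 ≤ q) (hq1 : q ≤ 1)
    (hqu : q < u) (hu1 : u < 1) (Q : ℕ → ℝ)
    (hQ : ∃ a : ℝ, 0 < a ∧ ∀ N : ℕ, 1 ≤ N → 0 ≤ Q N ∧ Q N ≤ a * (N : ℝ) ^ (1 + u)) :
    Tendsto (fun N : ℕ => (sigmaCap A₀ αd αr αs AM ρ κr q M Q N) ^ 2)
      atTop (nhds 0) :=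
  capacity_variance_tendsto_zero_general A₀ αd αr αs AM ρ κr hA₀ hαd hαr hαs hAM hρ hκr M hM q u hqu
    hu1 Q hQ
end
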